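/- Consider the action of B_n = C_2 ≀ S_n on T_n. Every flat F of T_n with e_* ∈ F and rank k+1 lies in the B_n-orbit of F_k^{II} = {e_*} ∪ {a_1, b_1, ..., a_k, b_k}, and the stabilizer of F_k^{II} in B_n is isomorphic to B_k × B_{n−k}. -/

import Mathlib

open Pointwise

inductive TnEdge (n : ℕ) : Type
  | spine : TnEdge n
  | a (i : Fin n) : TnEdge n
  | b (i : Fin n) : TnEdge n
  deriving DecidableEq, Fintype

open TnEdge

def TnIndep (n : ℕ) (S : Set (TnEdge n)) : Prop :=
  (∀ i : Fin n, ¬ ({spine, a i, b i} : Set (TnEdge n)) ⊆ S) ∧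
  (∀ i j : Fin n, i ≠ j → ¬ ({a i, b i, a j, b j} : Set (TnEdge n)) ⊆ S)

/-- The rank of a set in a matroid: the largest size of an independent subset. -/
noncomputable def mRank {α : Type*} (M : Matroid α) (S : Set α) : ℕ :=
  sSup (Set.ncard '' {I | I ⊆ S ∧ M.Indep I})

/-- A permutation of the spikes of the thagomizer matroid. -/
def spikePerm {n : ℕ} (σ : Equiv.Perm (Fin n)) : Equiv.Perm (TnEdge n) where
  toFun e := match e with | spine => spine | a i => a (σ i) | b i => b (σ i)
  invFun e := match e with | spine => spine | a i => a (σ.symm i) | b i => b (σ.symm i)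
  left_inv e := by cases e <;> simp
  right_inv e := by cases e <;> simp

/-- The swap of the two edges of the `i`-th spike. -/
def spikeSwap {n : ℕ} (i : Fin n) : Equiv.Perm (TnEdge n) :=
  Equiv.swap (a i) (b i)

/-- The hyperoctahedral group `B_n`, realized as the group of permutations of the
ground set of `T_n` generated by spike permutations and spike swaps. -/
def BnGroup (n : ℕ) : Subgroup (Equiv.Perm (TnEdge n)) :=
  Subgroup.closure (Set.range (spikePerm (n := n)) ∪ Set.range (spikeSwap (n := n)))

/-- The permutation action of `S_m` on the group `C_2^m`. -/
def permAutHom (m : ℕ) :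
    Equiv.Perm (Fin m) →* MulAut (Fin m → Multiplicative (ZMod 2)) where
  toFun σ := MulEquiv.arrowCongr σ (MulEquiv.refl _)
  map_one' := rfl
  map_mul' _ _ := rfl

/-- The hyperoctahedral group `B_m = C_2 ≀ S_m = C_2^m ⋊ S_m`. -/
def hyperoctahedral (m : ℕ) : Type :=
  SemidirectProduct (Fin m → Multiplicative (ZMod 2)) (Equiv.Perm (Fin m)) (permAutHom m)

noncomputable instance (m : ℕ) : Group (hyperoctahedral m) :=
  inferInstanceAs (Group (SemidirectProduct _ _ _))

/-- The representative flat `F_k^{II} = {e_*} ∪ {a_1, b_1, …, a_k, b_k}`. -/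
def FkII (n k : ℕ) : Set (TnEdge n) :=
  {spine} ∪ {e | ∃ i : Fin n, (i : ℕ) < k ∧ (e = a i ∨ e = b i)}

/-!
A flat `F ∋ e_*` is a union of whole spikes: `{e_*, a_i}` is independent while
`{e_*, a_i, b_i}` is dependent, so `a_i ∈ F` forces `b_i ∈ F` and vice versa. Hence
`F = {e_*} ∪ ⋃_{i ∈ S} {a_i, b_i}`, whose rank is `|S| + 1`: deleting one edge from an
independent subset leaves neither the spine nor a full spike, so what remains injects into `S`.
A spike permutation carries `S` to `{1, …, k}`.

`B_n` acts faithfully on `T_n`, and an element fixes `F_k^{II}` exactly when its permutation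
part preserves `{1, …, k}`. Splitting `Fin n = Fin k ⊕ Fin (n - k)`, these are the signed
permutations acting on both summands separately, i.e. `B_k × B_{n-k}`.
-/

open TnEdge Set

theorem Matroid.IsFlat.mem_of_indep_of_not_indep_insert {α : Type*} {M : Matroid α}
    {F I : Set α} {x : α} (hF : M.IsFlat F) (hI : M.Indep I) (hIF : I ⊆ F) (hx : x ∈ M.E)
    (hxI : ¬ M.Indep (insert x I)) : x ∈ F :=
  hF.closure ▸ M.closure_subset_closure hIF
    (hI.mem_closure_iff'.2 ⟨hx, fun h => (hxI h).elim⟩)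

theorem Set.exists_perm_image_eq_of_ncard_eq {α : Type*} [Finite α] {S T : Set α}
    (h : S.ncard = T.ncard) : ∃ σ : Equiv.Perm α, σ '' S = T := by
  classical
  obtain ⟨e⟩ : Nonempty (S ≃ T) :=
    Finite.card_eq.1 (by rwa [Nat.card_coe_set_eq, Nat.card_coe_set_eq])
  refine ⟨e.extendSubtype, eq_of_subset_of_ncard_le ?_ ?_⟩
  · rintro _ ⟨x, hx, rfl⟩
    exact e.extendSubtype_mem x hx
  · rw [ncard_image_of_injective _ (Equiv.injective _), h]

theorem Fin.ncard_setOf_val_lt {n k : ℕ} (hk : k ≤ n) :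
    {i : Fin n | (i : ℕ) < k}.ncard = k := by
  rw [ncard_eq_toFinset_card']
  simpa [hk] using Fin.card_filter_val_lt (n := n) (m := k)

abbrev C2 := Multiplicative (ZMod 2)

theorem C2.eq_one_or_eq_ofAdd_one (c : C2) : c = 1 ∨ c = Multiplicative.ofAdd 1 := by
  revert c; decide

@[simp] theorem C2.ofAdd_one_mul_self :
    (Multiplicative.ofAdd 1 : C2) * Multiplicative.ofAdd 1 = 1 :=
  rfl

def flipAut (ι : Type*) : Equiv.Perm ι →* MulAut (ι → C2) where
  toFun σ := MulEquiv.arrowCongr σ (MulEquiv.refl _)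
  map_one' := rfl
  map_mul' _ _ := rfl

@[simp] theorem flipAut_apply {ι : Type*} (σ : Equiv.Perm ι) (u : ι → C2) (i : ι) :
    flipAut ι σ u i = u (σ.symm i) :=
  rfl

/-- `hyperoctahedral m` unfolds to `SignedPerm (Fin m)`; the stabilizer isomorphism below is
typed through this. -/
abbrev SignedPerm (ι : Type*) := (ι → C2) ⋊[flipAut ι] Equiv.Perm ι

namespace SignedPerm

variable (α β : Type*)

def sumHom : SignedPerm α × SignedPerm β →* SignedPerm (α ⊕ β) where
  toFun p := ⟨Sum.elim p.1.left p.2.left, Equiv.sumCongr p.1.right p.2.right⟩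
  map_one' := by ext (_ | _) <;> rfl
  map_mul' _ _ := by ext (_ | _) <;> rfl

variable {α β}

theorem sumHom_injective : Function.Injective (sumHom α β) := by
  rintro ⟨⟨u, σ⟩, ⟨v, τ⟩⟩ ⟨⟨u', σ'⟩, ⟨v', τ'⟩⟩ h
  have hl : Sum.elim u v = Sum.elim u' v' := congrArg SemidirectProduct.left h
  have hr : Equiv.Perm.sumCongrHom α β (σ, τ) = Equiv.Perm.sumCongrHom α β (σ', τ') :=
    congrArg SemidirectProduct.right h
  obtain ⟨rfl, rfl⟩ := Prod.ext_iff.1 (Equiv.Perm.sumCongrHom_injective hr)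
  obtain rfl : u = u' := funext fun i => congrFun hl (Sum.inl i)
  obtain rfl : v = v' := funext fun j => congrFun hl (Sum.inr j)
  rfl

theorem mem_range_sumHom_iff [Finite α] [Finite β] {x : SignedPerm (α ⊕ β)} :
    x ∈ (sumHom α β).range ↔ x.right '' range Sum.inl = range Sum.inl := by
  constructor
  · rintro ⟨p, rfl⟩
    rw [← range_comp]
    change range (Sum.inl ∘ p.1.right) = _
    rw [range_comp, p.1.right.range_eq_univ, image_univ]
  · intro h
    obtain ⟨⟨σ, τ⟩, hστ⟩ :=
      Equiv.Perm.mem_sumCongrHom_range_of_perm_mapsTo_inl (h ▸ mapsTo_image _ _)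
    exact ⟨(⟨x.left ∘ Sum.inl, σ⟩, ⟨x.left ∘ Sum.inr, τ⟩),
      SemidirectProduct.ext (Sum.elim_comp_inl_inr _) hστ⟩

def congr (e : α ≃ β) : SignedPerm α ≃* SignedPerm β :=
  SemidirectProduct.congr (MulEquiv.arrowCongr e (MulEquiv.refl C2)) e.permCongrHom
    fun σ => by ext u x; simp [Equiv.permCongrHom, Equiv.permCongr, Equiv.equivCongr]

theorem congr_symm_right (e : α ≃ β) (x : SignedPerm β) :
    ⇑((congr e).symm x).right = e.symm ∘ x.right ∘ e := by
  ext y; simp [congr]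

end SignedPerm

namespace Thagomizer

variable {n : ℕ}

def spikeIndex : TnEdge n → Option (Fin n)
  | spine => none
  | a i => some i
  | b i => some i

/-- `spikeUnion S = {e_*} ∪ ⋃_{i ∈ S} {a_i, b_i}`. -/
def spikeUnion (S : Set (Fin n)) : Set (TnEdge n) :=
  {e | ∀ i, spikeIndex e = some i → i ∈ S}

@[simp] theorem spine_mem_spikeUnion (S : Set (Fin n)) : spine ∈ spikeUnion S := by
  simp [spikeUnion, spikeIndex]

@[simp] theorem a_mem_spikeUnion {S : Set (Fin n)} {i : Fin n} :
    a i ∈ spikeUnion S ↔ i ∈ S := by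
  simp [spikeUnion, spikeIndex]

@[simp] theorem b_mem_spikeUnion {S : Set (Fin n)} {i : Fin n} :
    b i ∈ spikeUnion S ↔ i ∈ S := by
  simp [spikeUnion, spikeIndex]

theorem FkII_eq_spikeUnion (k : ℕ) : FkII n k = spikeUnion {i | (i : ℕ) < k} := by
  ext (_ | i | i) <;> simp [FkII]

theorem spikeUnion_injective : Function.Injective (spikeUnion (n := n)) := by
  intro S T h
  ext i
  rw [← a_mem_spikeUnion, h, a_mem_spikeUnion]

theorem image_spikeUnion {g : Equiv.Perm (TnEdge n)} {σ : Equiv.Perm (Fin n)}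
    (hg : ∀ e, spikeIndex (g e) = (spikeIndex e).map σ) (S : Set (Fin n)) :
    g '' spikeUnion S = spikeUnion (σ '' S) := by
  ext e
  have he := hg (g.symm e)
  rw [g.apply_symm_apply] at he
  simp only [mem_image_equiv, spikeUnion, mem_ofPred_eq, he]
  cases spikeIndex (g.symm e) <;> simp

theorem injOn_spikeIndex {J : Set (TnEdge n)} (hJ : ∀ i, ¬ (a i ∈ J ∧ b i ∈ J)) :
    InjOn spikeIndex J := by
  rintro (_ | i | i) hx (_ | j | j) hy h <;>
    simp only [spikeIndex, reduceCtorEq, Option.some.injEq] at h <;> subst_vars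
  all_goals first | rfl | exact (hJ _ ⟨‹_›, ‹_›⟩).elim

theorem ncard_le_of_subset_spikeUnion {S : Set (Fin n)} {J : Set (TnEdge n)}
    (hJS : J ⊆ spikeUnion S) (hsp : spine ∉ J) (hJ : ∀ i, ¬ (a i ∈ J ∧ b i ∈ J)) :
    J.ncard ≤ S.ncard := by
  rw [← ncard_image_of_injective S (Option.some_injective _)]
  refine ncard_le_ncard_of_injOn spikeIndex ?_ (injOn_spikeIndex hJ) (toFinite _)
  rintro (_ | i | i) he
  · exact (hsp he).elim
  all_goals exact ⟨i, by simpa using hJS he, rfl⟩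

theorem exists_spikeFree_diff_of_tnIndep {I : Set (TnEdge n)} (hI : TnIndep n I) :
    ∃ x, spine ∉ I \ {x} ∧ ∀ i, ¬ (a i ∈ I \ {x} ∧ b i ∈ I \ {x}) := by
  by_cases h : spine ∉ I ∧ ∃ i, a i ∈ I ∧ b i ∈ I
  · obtain ⟨hsp, i, hai, hbi⟩ := h
    refine ⟨b i, fun h => hsp h.1, fun j ⟨hj, hj'⟩ => ?_⟩
    have hji : j ≠ i := by rintro rfl; exact hj'.2 rfl
    exact hI.2 j i hji (by simp [insert_subset_iff, hj.1, hj'.1, hai, hbi])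
  · refine ⟨spine, fun h => h.2 rfl, fun i ⟨hai, hbi⟩ => ?_⟩
    by_cases hsp : spine ∈ I
    · exact hI.1 i (by simp [insert_subset_iff, hsp, hai.1, hbi.1])
    · exact h ⟨hsp, i, hai.1, hbi.1⟩

theorem ncard_le_of_tnIndep {S : Set (Fin n)} {I : Set (TnEdge n)} (hI : TnIndep n I)
    (hIS : I ⊆ spikeUnion S) : I.ncard ≤ S.ncard + 1 := by
  obtain ⟨x, hsp, hfree⟩ := exists_spikeFree_diff_of_tnIndep hI
  have := ncard_le_of_subset_spikeUnion (sdiff_subset.trans hIS) hsp hfree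
  have := pred_ncard_le_ncard_sdiff_singleton I x
  omega

theorem tnIndep_insert_spine_image_a (S : Set (Fin n)) : TnIndep n (insert spine (a '' S)) := by
  constructor <;> intros <;> simp [insert_subset_iff]

theorem ncard_insert_spine_image_a (S : Set (Fin n)) :
    (insert spine (a '' S)).ncard = S.ncard + 1 := by
  rw [ncard_insert_of_notMem (by simp), ncard_image_of_injective _ fun _ _ h => by cases h; rfl]

theorem mRank_spikeUnion {M : Matroid (TnEdge n)} (hInd : ∀ S, M.Indep S ↔ TnIndep n S)
    (S : Set (Fin n)) : mRank M (spikeUnion S) = S.ncard + 1 := by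
  refine IsGreatest.csSup_eq ⟨⟨insert spine (a '' S), ⟨?_, ?_⟩, ?_⟩, ?_⟩
  · rintro _ (rfl | ⟨i, hi, rfl⟩) <;> simp [*]
  · exact (hInd _).2 (tnIndep_insert_spine_image_a S)
  · exact ncard_insert_spine_image_a S
  · rintro _ ⟨I, ⟨hIS, hI⟩, rfl⟩
    exact ncard_le_of_tnIndep ((hInd I).1 hI) hIS

theorem tnIndep_pair_spine (e : TnEdge n) : TnIndep n {spine, e} := by
  have hspike : ∀ i, ¬ ({a i, b i} : Set (TnEdge n)) ⊆ {spine, e} := fun i h => by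
    have ha : a i = e := by simpa using h (mem_insert _ _)
    have hb : b i = e := by simpa using h (mem_insert_of_mem _ rfl)
    exact absurd (ha.trans hb.symm) (by simp)
  exact ⟨fun i h => hspike i ((subset_insert _ _).trans h),
    fun i j _ h => hspike i (subset_trans (by simp [insert_subset_iff]) h)⟩

section Flat

variable {M : Matroid (TnEdge n)} (hE : M.E = univ) (hInd : ∀ S, M.Indep S ↔ TnIndep n S)
  {F : Set (TnEdge n)} (hF : M.IsFlat F) (hsp : spine ∈ F)
include hE hInd hF hsp

theorem mem_flat_of_not_tnIndep {x y : TnEdge n} (hx : x ∈ F)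
    (hxy : ¬ TnIndep n {y, spine, x}) : y ∈ F :=
  hF.mem_of_indep_of_not_indep_insert ((hInd _).2 (tnIndep_pair_spine x))
    (pair_subset hsp hx) (hE ▸ mem_univ y) (by rwa [hInd])

theorem flat_eq_spikeUnion : F = spikeUnion {i | a i ∈ F} := by
  ext (_ | i | i)
  · simp [hsp]
  · simp
  · rw [b_mem_spikeUnion, mem_ofPred_eq]
    constructor <;> intro h <;>
      refine mem_flat_of_not_tnIndep hE hInd hF hsp h fun hI => hI.1 i ?_ <;>
      simp [insert_subset_iff]

end Flat

@[simp] theorem spikePerm_spine (σ : Equiv.Perm (Fin n)) : spikePerm σ spine = spine := rfl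

@[simp] theorem spikePerm_a (σ : Equiv.Perm (Fin n)) (i : Fin n) : spikePerm σ (a i) = a (σ i) :=
  rfl

@[simp] theorem spikePerm_b (σ : Equiv.Perm (Fin n)) (i : Fin n) : spikePerm σ (b i) = b (σ i) :=
  rfl

theorem spikeIndex_spikePerm (σ : Equiv.Perm (Fin n)) (e : TnEdge n) :
    spikeIndex (spikePerm σ e) = (spikeIndex e).map σ := by
  cases e <;> rfl

theorem exists_mem_BnGroup_image_eq_FkII {k : ℕ} (hk : k ≤ n) {M : Matroid (TnEdge n)}
    (hE : M.E = univ) (hInd : ∀ S, M.Indep S ↔ TnIndep n S) {F : Set (TnEdge n)}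
    (hF : M.IsFlat F) (hsp : spine ∈ F) (hrk : mRank M F = k + 1) :
    ∃ g ∈ BnGroup n, ⇑g '' F = FkII n k := by
  set S := {i | a i ∈ F}
  have hFS : F = spikeUnion S := flat_eq_spikeUnion hE hInd hF hsp
  have hS : S.ncard = {i : Fin n | (i : ℕ) < k}.ncard := by
    rw [hFS, mRank_spikeUnion hInd] at hrk
    rw [Fin.ncard_setOf_val_lt hk]
    omega
  obtain ⟨σ, hσ⟩ := exists_perm_image_eq_of_ncard_eq hS
  refine ⟨spikePerm σ, Subgroup.subset_closure (Or.inl ⟨σ, rfl⟩), ?_⟩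
  rw [hFS, image_spikeUnion (spikeIndex_spikePerm σ), hσ, FkII_eq_spikeUnion]

def flipEdge (ε : Fin n → C2) : TnEdge n → TnEdge n
  | spine => spine
  | a i => if ε i = 1 then a i else b i
  | b i => if ε i = 1 then b i else a i

theorem flipEdge_flipEdge (ε δ : Fin n → C2) (e : TnEdge n) :
    flipEdge ε (flipEdge δ e) = flipEdge (ε * δ) e := by
  cases e with
  | spine => rfl
  | _ i =>
    rcases C2.eq_one_or_eq_ofAdd_one (ε i) with hε | hε <;>
    rcases C2.eq_one_or_eq_ofAdd_one (δ i) with hδ | hδ <;>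
    simp [flipEdge, hε, hδ]

theorem spikeIndex_flipEdge (ε : Fin n → C2) (e : TnEdge n) :
    spikeIndex (flipEdge ε e) = spikeIndex e := by
  cases e <;> simp only [flipEdge] <;> split_ifs <;> rfl

def flipHom : (Fin n → C2) →* Equiv.Perm (TnEdge n) where
  toFun ε :=
    { toFun := flipEdge ε
      invFun := flipEdge ε⁻¹
      left_inv e := by rw [flipEdge_flipEdge, inv_mul_cancel]; cases e <;> rfl
      right_inv e := by rw [flipEdge_flipEdge, mul_inv_cancel]; cases e <;> rfl }
  map_one' := by ext e; cases e <;> rfl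
  map_mul' ε δ := by ext e; exact (flipEdge_flipEdge ε δ e).symm

def spikePermHom : Equiv.Perm (Fin n) →* Equiv.Perm (TnEdge n) where
  toFun := spikePerm
  map_one' := by ext e; cases e <;> rfl
  map_mul' _ _ := by ext e; cases e <;> rfl

theorem flipHom_mulSingle_ofAdd_one (i : Fin n) :
    flipHom (Pi.mulSingle i (Multiplicative.ofAdd 1)) = spikeSwap i := by
  ext e
  cases e with
  | spine => simp [flipHom, flipEdge, spikeSwap, Equiv.swap_apply_of_ne_of_ne]
  | _ j =>
    by_cases h : j = i
    · subst h; simp [flipHom, flipEdge, spikeSwap]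
    · simp [flipHom, flipEdge, spikeSwap, h, Equiv.swap_apply_of_ne_of_ne]

theorem flipHom_mem_BnGroup (ε : Fin n → C2) : flipHom ε ∈ BnGroup n := by
  induction ε using Pi.mulSingle_induction with
  | one => simp
  | mul ε δ hε hδ => simpa using mul_mem hε hδ
  | mulSingle i c =>
    rcases C2.eq_one_or_eq_ofAdd_one c with rfl | rfl
    · simp
    · rw [flipHom_mulSingle_ofAdd_one]
      exact Subgroup.subset_closure (Or.inr ⟨i, rfl⟩)

theorem flipHom_flipAut_mul_spikePerm (σ : Equiv.Perm (Fin n)) (ε : Fin n → C2) :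
    flipHom (flipAut (Fin n) σ ε) * spikePerm σ = spikePerm σ * flipHom ε := by
  ext e
  cases e <;> simp [flipHom, flipEdge] <;> split_ifs <;> rfl

/-- The action of `B_n`: `(ε, σ)` moves spike `i` to spike `σ i` and then swaps the two edges of
spike `j` whenever `ε j ≠ 1`. -/
def edgePermHom (n : ℕ) : SignedPerm (Fin n) →* Equiv.Perm (TnEdge n) :=
  SemidirectProduct.lift flipHom spikePermHom fun σ =>
    MonoidHom.ext fun ε => eq_mul_inv_iff_mul_eq.2 (flipHom_flipAut_mul_spikePerm σ ε)

theorem edgePermHom_inl (ε : Fin n → C2) :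
    edgePermHom n (SemidirectProduct.inl ε) = flipHom ε :=
  SemidirectProduct.lift_inl ..

theorem edgePermHom_inr (σ : Equiv.Perm (Fin n)) :
    edgePermHom n (SemidirectProduct.inr σ) = spikePerm σ :=
  SemidirectProduct.lift_inr ..

theorem edgePermHom_apply (x : SignedPerm (Fin n)) (e : TnEdge n) :
    edgePermHom n x e = flipEdge x.left (spikePerm x.right e) := rfl

theorem image_spikeUnion_edgePermHom (x : SignedPerm (Fin n)) (S : Set (Fin n)) :
    edgePermHom n x '' spikeUnion S = spikeUnion (x.right '' S) :=
  image_spikeUnion (fun e => by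
    rw [edgePermHom_apply, spikeIndex_flipEdge, spikeIndex_spikePerm]) S

theorem edgePermHom_injective : Function.Injective (edgePermHom n) := by
  refine (injective_iff_map_eq_one _).2 fun x hx => ?_
  have key : ∀ i, x.right i = i ∧ x.left (x.right i) = 1 := fun i => by
    have := congrArg (· (a i)) hx
    simp only [edgePermHom_apply, Equiv.Perm.one_apply, spikePerm_a, flipEdge] at this
    split_ifs at this with h
    exact ⟨by simpa using this, h⟩
  exact SemidirectProduct.ext (funext fun i => by simpa [(key i).1] using (key i).2)
    (Equiv.ext fun i => (key i).1)

theorem range_edgePermHom : (edgePermHom n).range = BnGroup n := by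
  apply le_antisymm
  · rintro _ ⟨x, rfl⟩
    rw [← SemidirectProduct.inl_left_mul_inr_right x, map_mul, edgePermHom_inl, edgePermHom_inr]
    exact mul_mem (flipHom_mem_BnGroup x.left) (Subgroup.subset_closure (Or.inl ⟨x.right, rfl⟩))
  · refine (Subgroup.closure_le _).2 ?_
    rintro _ (⟨σ, rfl⟩ | ⟨i, rfl⟩)
    · exact ⟨_, edgePermHom_inr σ⟩
    · exact ⟨_, (edgePermHom_inl _).trans (flipHom_mulSingle_ofAdd_one i)⟩

section Stabilizer

variable {k : ℕ} (hk : k ≤ n)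

def finSplit : Fin k ⊕ Fin (n - k) ≃ Fin n :=
  finSumFinEquiv.trans (finCongr (Nat.add_sub_cancel' hk))

theorem finSplit_image_range_inl : finSplit hk '' range Sum.inl = {i : Fin n | (i : ℕ) < k} := by
  ext i
  constructor
  · rintro ⟨_, ⟨j, rfl⟩, rfl⟩
    exact j.2
  · intro h
    exact ⟨Sum.inl ⟨i, h⟩, ⟨_, rfl⟩, Fin.ext rfl⟩

def joinHom : SignedPerm (Fin k) × SignedPerm (Fin (n - k)) →* SignedPerm (Fin n) :=
  (SignedPerm.congr (finSplit hk)).toMonoidHom.comp (SignedPerm.sumHom _ _)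

theorem joinHom_injective : Function.Injective (joinHom hk) :=
  (SignedPerm.congr (finSplit hk)).injective.comp SignedPerm.sumHom_injective

theorem mem_range_joinHom_iff {x : SignedPerm (Fin n)} :
    x ∈ (joinHom hk).range ↔
      x.right '' {i : Fin n | (i : ℕ) < k} = {i : Fin n | (i : ℕ) < k} := by
  rw [joinHom, MonoidHom.range_comp, Subgroup.mem_map_equiv, SignedPerm.mem_range_sumHom_iff,
    SignedPerm.congr_symm_right, ← finSplit_image_range_inl hk, image_comp, image_comp,
    ← Equiv.eq_image_iff_symm_image_eq]

theorem image_FkII_eq_iff_mem_range_joinHom (x : SignedPerm (Fin n)) :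
    edgePermHom n x '' FkII n k = FkII n k ↔ x ∈ (joinHom hk).range := by
  rw [mem_range_joinHom_iff, FkII_eq_spikeUnion, image_spikeUnion_edgePermHom,
    spikeUnion_injective.eq_iff]

def toStabilizerFkII :
    SignedPerm (Fin k) × SignedPerm (Fin (n - k)) →*
      MulAction.stabilizer (BnGroup n) (FkII n k) :=
  (((edgePermHom n).comp (joinHom hk)).codRestrict (BnGroup n) fun _ =>
      range_edgePermHom (n := n) ▸ ⟨_, rfl⟩).codRestrict _ fun p =>
    (image_FkII_eq_iff_mem_range_joinHom hk _).2 ⟨p, rfl⟩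

theorem toStabilizerFkII_bijective : Function.Bijective (toStabilizerFkII hk) := by
  refine ⟨fun p q h => joinHom_injective hk (edgePermHom_injective (congrArg (·.1.1) h)), ?_⟩
  rintro ⟨⟨g, hg⟩, hstab⟩
  obtain ⟨x, rfl⟩ := range_edgePermHom (n := n) ▸ hg
  obtain ⟨p, rfl⟩ := (image_FkII_eq_iff_mem_range_joinHom hk x).1 hstab
  exact ⟨p, rfl⟩

end Stabilizer

end Thagomizer

theorem thagomizer_typeII_orbit_and_stabilizer (n k : ℕ) (hk : k ≤ n)
    (M : Matroid (TnEdge n)) (hE : M.E = Set.univ)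
    (hInd : ∀ S, M.Indep S ↔ TnIndep n S)
    (F : Set (TnEdge n)) (hF : M.IsFlat F) (hsp : spine ∈ F)
    (hrk : mRank M F = k + 1) :
    (∃ g ∈ BnGroup n, ⇑g '' F = FkII n k) ∧
    Nonempty (MulAction.stabilizer (BnGroup n) (FkII n k) ≃*
      hyperoctahedral k × hyperoctahedral (n - k)) :=
  ⟨Thagomizer.exists_mem_BnGroup_image_eq_FkII hk hE hInd hF hsp hrk,
    ⟨(MulEquiv.ofBijective _ (Thagomizer.toStabilizerFkII_bijective hk)).symm⟩⟩
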